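/- arXiv:math/0609512 — 7 statements merged into one kernel-verified Lean document; each statement's English description precedes it below -/
import Mathlib

section
/- With □ and ∇ as the operators (f)□ = (x-qy)(f-f^s)/(x-y) and (f)∇ = (f)□ - (1+q)f on Laurent polynomials in x,y, one has □∘∇ = 0 and ∇∘□ = 0. -/
/-- With `(f)□ = (x-qy)(f-f^s)/(x-y)` and `(f)∇ = (f)□ - (1+q)f` on
Laurent polynomials in `x,y` (realized inside a field `F` with the swap given by an
involutive ring automorphism `σ` fixing `q`), one has `□∘∇ = 0` and `∇∘□ = 0`. -/
theorem box_nabla_zero {F : Type*} [Field F] (q x y : F) (hxy : x ≠ y)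
    (σ : F ≃+* F) (hinv : ∀ f, σ (σ f) = f) (hσq : σ q = q) (hσx : σ x = y)
    (Box Nab : F → F)
    (hBox : ∀ f, Box f = (x - q * y) * ((f - σ f) / (x - y)))
    (hNab : ∀ f, Nab f = Box f - (1 + q) * f) :
    (∀ f, Box (Nab f) = 0) ∧ (∀ f, Nab (Box f) = 0) := by
  have hσy : σ y = x := by rw [← hσx, hinv]
  have hxy' : x - y ≠ 0 := sub_ne_zero.mpr hxy
  have hyx' : y - x ≠ 0 := sub_ne_zero.mpr (Ne.symm hxy)
  have hσBox : ∀ f, σ (Box f) = (y - q * x) * ((f - σ f) / (x - y)) := by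
    intro f
    rw [hBox, map_mul, map_div₀, map_sub, map_sub, map_sub, map_mul, hσq, hσx, hσy, hinv]
    field_simp
    ring
  have key : ∀ f, Box (Box f) = (1 + q) * Box f := by
    intro f
    rw [hBox (Box f), hσBox, hBox f]
    field_simp
    ring
  have hlin : ∀ a b : F, Box (a - (1 + q) * b) = Box a - (1 + q) * Box b := by
    intro a b
    rw [hBox, hBox, hBox, map_sub, map_mul, map_add, map_one, hσq]
    field_simp
    ring
  refine ⟨fun f => ?_, fun f => ?_⟩
  · rw [hNab, hlin, key, sub_self]
  · rw [hNab, key, sub_self]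
end

section
/- For the two-variable case n = 2 and a partition λ = (λ₁, λ₂) with λ₁ ≥ λ₂ ≥ 0 and λ₁ > λ₂, the polynomial x₁^{λ₁} x₂^{λ₂} applied to the operator □ = (x₁ - q x₂)∂₁ equals the Hall–Littlewood polynomial P_λ(x₁, x₂; q) = Σ over the two orderings, i.e. (x^λ)□ = x₁^{λ₁}x₂^{λ₂} + x₁^{λ₂}x₂^{λ₁} + (1-q)(x₁^{λ₁-1}x₂^{λ₂+1} + ⋯ + x₁^{λ₂+1}x₂^{λ₁-1}). -/
/-! The swap `σ` turns the numerator into `(x - q y) x^a y^b - (y - q x) x^b y^a`, and this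
polynomial equals `(x - y) P_λ`: after splitting off `(x - y)(x^a y^b + x^b y^a)` what is left
is `(1 - q)(x^a y^{b+1} - x^{b+1} y^a)`, which is `(1 - q)(x - y)` times the middle sum by the
geometric sum formula `(x - y) ∑_{i < n} x^i y^{n-1-i} = x^n - y^n`. -/

open Finset

section CommRing

variable {R : Type*} [CommRing R]

/-- `P_{(a,b)}(x, y; q)`; the formula is the Hall–Littlewood polynomial only for `a > b`. -/
def hallLittlewood₂ (q x y : R) (a b : ℕ) : R :=
  x ^ a * y ^ b + x ^ b * y ^ a + (1 - q) * ∑ j ∈ Ioo b a, x ^ j * y ^ (a + b - j)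

theorem sum_Ioo_pow_mul_pow_mul_sub (x y : R) {a b : ℕ} (hab : b < a) :
    (∑ j ∈ Ioo b a, x ^ j * y ^ (a + b - j)) * (x - y)
      = x ^ a * y ^ (b + 1) - x ^ (b + 1) * y ^ a := by
  obtain ⟨n, rfl⟩ := Nat.exists_eq_add_of_lt hab
  have hsum : ∑ j ∈ Ioo b (b + n + 1), x ^ j * y ^ (b + n + 1 + b - j)
      = (x * y) ^ (b + 1) * ∑ i ∈ range n, x ^ i * y ^ (n - 1 - i) := by
    rw [← Ico_add_one_left_eq_Ioo, sum_Ico_eq_sum_range, mul_sum]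
    refine sum_congr (by congr 1; omega) fun i hi => ?_
    have hexp : b + n + 1 + b - (b + 1 + i) = (b + 1) + (n - 1 - i) := by
      have := mem_range.mp hi; omega
    rw [hexp]
    ring
  rw [hsum, mul_assoc, geom_sum₂_mul]
  ring

theorem hallLittlewood₂_mul_sub (q x y : R) {a b : ℕ} (hab : b < a) :
    hallLittlewood₂ q x y a b * (x - y)
      = (x - q * y) * (x ^ a * y ^ b) - (y - q * x) * (y ^ a * x ^ b) := by
  rw [hallLittlewood₂, add_mul, mul_assoc, sum_Ioo_pow_mul_pow_mul_sub x y hab]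
  ring

end CommRing

/-- For `n = 2` and a partition `λ = (a, b)` with `a > b ≥ 0`, applying the
operator `□ = (x₁ - q x₂)∂₁` (acting on the right: multiply by `x₁ - q x₂`, then apply
the divided difference `∂₁`) to the dominant monomial `x^λ = x₁^a x₂^b` gives the
Hall–Littlewood polynomial
`P_λ = x₁^a x₂^b + x₁^b x₂^a + (1-q)(x₁^{a-1}x₂^{b+1} + ⋯ + x₁^{b+1}x₂^{a-1})`.
The ring `ℚ(q)[x₁,x₂]` is realized inside a field `F`, the swap of `x` and `y` being an
involutive ring automorphism `σ` fixing `q`. -/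
theorem box_of_dominant_monomial_is_hall_littlewood {F : Type*} [Field F]
    (q x y : F) (hxy : x ≠ y)
    (σ : F ≃+* F) (hinv : ∀ f, σ (σ f) = f) (hσq : σ q = q) (hσx : σ x = y)
    (a b : ℕ) (hab : b < a) :
    ((x - q * y) * (x ^ a * y ^ b) - σ ((x - q * y) * (x ^ a * y ^ b))) / (x - y)
      = x ^ a * y ^ b + x ^ b * y ^ a
        + (1 - q) * ∑ j ∈ Finset.Ioo b a, x ^ j * y ^ (a + b - j) := by
  have hσy : σ y = x := by rw [← hσx, hinv]
  rw [div_eq_iff (sub_ne_zero.mpr hxy), ← hallLittlewood₂, hallLittlewood₂_mul_sub q x y hab]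
  simp only [map_mul, map_sub, map_pow, hσq, hσx, hσy]
end

section
/- The bilinear form (f, g)_q = CT(f · g^♣ · Π_{1≤i<j≤n}(1-xᵢ/xⱼ)/(1-qxᵢ/xⱼ)) on Laurent polynomials is symmetric: (f, g)_q = (g, f)_q. -/
open scoped Classical

/-- Pairs `i < j` of `Fin n`, indexing the expansion variables `u_{ij} = xᵢ/xⱼ`. -/
abbrev ThetaPairs (n : ℕ) := {p : Fin n × Fin n // p.1 < p.2}

/-- The kernel `Θ = Π_{i<j} (1-xᵢ/xⱼ)/(1-q xᵢ/xⱼ)`, expanded as a formal power series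
in the variables `u_{ij} = xᵢ/xⱼ` (for `i < j`). -/
noncomputable def thetaKernel (n : ℕ) (K : Type*) [Field K] (q : K) :
    MvPowerSeries (ThetaPairs n) K :=
  ∏ p : ThetaPairs n,
    (1 - MvPowerSeries.X p) * (1 - MvPowerSeries.C q * MvPowerSeries.X p)⁻¹

/-- The exponent of `xᵢ` in the monomial `Π u_{jk}^{d(j,k)}`. -/
noncomputable def expVec {n : ℕ} (d : ThetaPairs n →₀ ℕ) (i : Fin n) : ℤ :=
  ∑ p : ThetaPairs n,
    (d p : ℤ) * ((if p.1.1 = i then 1 else 0) - (if p.1.2 = i then 1 else 0))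

/-- The iterated constant term `CT(x^u Θ)`. -/
noncomputable def ctTheta (n : ℕ) (K : Type*) [Field K] (q : K) (u : Fin n → ℤ) : K :=
  finsum (fun d : ThetaPairs n →₀ ℕ =>
    if ∀ i, u i + expVec d i = 0 then MvPowerSeries.coeff d (thetaKernel n K q) else 0)

/-- The bilinear form `(f, g)_q = CT(f g^♣ Θ)` on Laurent polynomials
(`f, g : (Fin n → ℤ) →₀ K`, a monomial `x^v` with coefficient `c` being the finitely
supported function sending `v` to `c`); `♣` sends `xᵢ ↦ 1/x_{n+1-i}`, so the monomial
`x^w` of `g` contributes through `(x^w)^♣ = x^{w♣}` with `w♣ i = -w (rev i)`. -/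
noncomputable def thetaPairing (n : ℕ) (K : Type*) [Field K] (q : K)
    (f g : (Fin n → ℤ) →₀ K) : K :=
  f.sum fun v cv => g.sum fun w cw =>
    cv * cw * ctTheta n K q (fun i => v i - w (Fin.rev i))

/-! `♣` permutes the expansion variables, `(xᵢ/xⱼ)^♣ = x_{rev j}/x_{rev i}`, and hence the factors
of `Θ`; so `CT(x^u Θ) = CT((x^u Θ)^♣) = CT(x^{u♣} Θ)`. Symmetry follows because
`(x^v (x^w)^♣)^♣ = x^w (x^v)^♣`. -/

namespace MvPowerSeries

variable {σ τ : Type*}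

theorem rename_inv {k : Type*} [Field k] (e : σ ≃ τ) (φ : MvPowerSeries σ k) :
    rename e φ⁻¹ = (rename e φ)⁻¹ := by
  by_cases h : constantCoeff φ = 0
  · rw [inv_eq_zero.mpr h, inv_eq_zero.mpr (by rwa [constantCoeff_rename]), map_zero]
  · rw [MvPowerSeries.eq_inv_iff_mul_eq_one (by rwa [constantCoeff_rename]), ← map_mul,
      MvPowerSeries.inv_mul_cancel φ h, map_one]

theorem coeff_equivMapDomain_rename {R : Type*} [CommSemiring R] (e : σ ≃ τ)
    (φ : MvPowerSeries σ R) (d : σ →₀ ℕ) :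
    coeff (d.equivMapDomain e) (rename e φ) = coeff d φ := by
  simpa [Finsupp.embDomain_eq_mapDomain, Finsupp.equivMapDomain_eq_mapDomain] using
    coeff_embDomain_rename e.toEmbedding φ d

end MvPowerSeries

open MvPowerSeries

section Clubsuit

variable {n : ℕ} {K : Type*} [Field K]

def ThetaPairs.rev (n : ℕ) : Equiv.Perm (ThetaPairs n) where
  toFun p := ⟨(p.1.2.rev, p.1.1.rev), Fin.rev_lt_rev.2 p.2⟩
  invFun p := ⟨(p.1.2.rev, p.1.1.rev), Fin.rev_lt_rev.2 p.2⟩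
  left_inv p := by simp
  right_inv p := by simp

theorem rename_thetaKernel (q : K) :
    rename (ThetaPairs.rev n) (thetaKernel n K q) = thetaKernel n K q := by
  simp only [thetaKernel, map_prod, map_mul, map_sub, map_one, rename_inv, rename_X, rename_C]
  exact Fintype.prod_equiv (ThetaPairs.rev n) _ _ fun p => rfl

theorem coeff_equivMapDomain_thetaKernel (q : K) (d : ThetaPairs n →₀ ℕ) :
    coeff (d.equivMapDomain (ThetaPairs.rev n)) (thetaKernel n K q) =
      coeff d (thetaKernel n K q) := by
  conv_lhs => rw [← rename_thetaKernel q]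
  exact coeff_equivMapDomain_rename _ _ d

theorem expVec_equivMapDomain_rev (d : ThetaPairs n →₀ ℕ) (i : Fin n) :
    expVec (d.equivMapDomain (ThetaPairs.rev n)) i = -expVec d i.rev := by
  rw [expVec, expVec, ← Finset.sum_neg_distrib]
  refine Fintype.sum_equiv (ThetaPairs.rev n) _ _ fun p => ?_
  simp only [Finsupp.equivMapDomain_apply, ThetaPairs.rev, Equiv.coe_fn_mk, Equiv.coe_fn_symm_mk,
    Fin.rev_inj]
  ring

theorem ctTheta_neg_rev (q : K) (u : Fin n → ℤ) :
    ctTheta n K q (fun i => -u i.rev) = ctTheta n K q u := by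
  rw [ctTheta, ← finsum_comp_equiv (Finsupp.equivCongrLeft (ThetaPairs.rev n))]
  refine finsum_congr fun d => ?_
  rw [Finsupp.equivCongrLeft_apply, coeff_equivMapDomain_thetaKernel]
  congr 1
  simp only [expVec_equivMapDomain_rev]
  refine propext ⟨fun h i => ?_, fun h i => by linarith [h i.rev]⟩
  linarith [Fin.rev_rev i ▸ h i.rev]

end Clubsuit

/-- the bilinear form `(f, g)_q = CT(f g^♣ Θ)` is symmetric. -/
theorem thetaPairing_symm (n : ℕ) (K : Type*) [Field K] (q : K)
    (f g : (Fin n → ℤ) →₀ K) :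
    thetaPairing n K q f g = thetaPairing n K q g f := by
  rw [thetaPairing, thetaPairing, Finsupp.sum_comm]
  refine Finsupp.sum_congr fun w _ => Finsupp.sum_congr fun v _ => ?_
  rw [mul_comm (f v), ← ctTheta_neg_rev]
  simp only [Fin.rev_rev, neg_sub]
end

section
/- For n = 2, the operator □₁ is self-adjoint for the bilinear form (f,g)_q = CT(f g^♣ (1-x₁/x₂)/(1-qx₁/x₂)): for all Laurent polynomials f, g in x₁, x₂, ((f)□₁, g)_q = (f, (g)□₁)_q. -/
open scoped Classical

/-- Laurent polynomials in two variables `x₁, x₂` over `K`. -/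
abbrev Laurent2 (K : Type*) [CommRing K] := AddMonoidAlgebra K (ℤ × ℤ)

/-- The kernel `(1 - x₁/x₂)/(1 - q x₁/x₂)` expanded as a power series in `u = x₁/x₂`. -/
noncomputable def theta2 {K : Type*} [Field K] (q : K) : PowerSeries K :=
  (1 - PowerSeries.X) * (1 - PowerSeries.C q * PowerSeries.X)⁻¹

/-- The constant term `CT(x₁^m x₂^p · θ)` (coefficient of `x₁⁰` then of `x₂⁰`). -/
noncomputable def ctMono {K : Type*} [Field K] (q : K) (m p : ℤ) : K :=
  if p = -m ∧ 0 ≤ -m then PowerSeries.coeff (-m).toNat (theta2 q) else 0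

/-- The scalar product `(f, g)_q = CT(f g^♣ θ)`; `♣` sends `x₁ ↦ 1/x₂`, `x₂ ↦ 1/x₁`,
so the monomials `x₁^a x₂^b` of `f` and `x₁^c x₂^d` of `g` contribute
`CT(x₁^{a-d} x₂^{b-c} θ)`. -/
noncomputable def pairing2 {K : Type*} [Field K] (q : K) (f g : Laurent2 K) : K :=
  Finsupp.sum f.coeff fun v cv => Finsupp.sum g.coeff fun w cw =>
    cv * cw * ctMono q (v.1 - w.2) (v.2 - w.1)

/-- The swap `f ↦ f^{s₁}` of `x₁` and `x₂` on Laurent polynomials. -/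
noncomputable def swap2 {K : Type*} [CommRing K] (f : Laurent2 K) : Laurent2 K :=
  AddMonoidAlgebra.ofCoeff (Finsupp.mapDomain (Prod.swap) f.coeff)

/-! Write `θ = (1 - x₁/x₂)/(1 - qx₁/x₂)`, so that `(f, g)_q = CT(f · g^♣ · θ)`. The involution `♣`
is a ring automorphism commuting with `s₁` that multiplies `x₁` and `x₂` by the same unit
`(x₁x₂)⁻¹`, so it preserves the relation `((g)□₁)(x₁ - x₂) = (x₁ - qx₂)g - (x₂ - qx₁)g^{s₁}`.
Combining the relations for `f` and `g^♣` gives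
`((f)□₁ · g^♣ - f · ((g)□₁)^♣)(x₁ - x₂) = (qx₁ - x₂) S` with `S = f^{s₁} g^♣ - f (g^♣)^{s₁}`.
Since `(qx₁ - x₂) θ/(x₁ - x₂) = 1`, the difference of the two pairings is `CT(S)`, which vanishes
because `s₁` exchanges the two terms of `S` and fixes constant terms. -/

section

variable {K : Type*} [Field K]

section PowerSeries

open PowerSeries

lemma PowerSeries.mk_pow_eq_inv_one_sub_C_mul_X (q : K) : mk (q ^ ·) = (1 - C q * X)⁻¹ := by
  rw [PowerSeries.eq_inv_iff_mul_eq_one (by simp)]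
  simpa [rescale_mk, rescale_X] using congrArg (rescale q) (mk_one_mul_one_sub_eq_one (S := K))

lemma coeff_zero_theta2 (q : K) : coeff 0 (theta2 q) = 1 := by
  simp [theta2, ← mk_pow_eq_inv_one_sub_C_mul_X, sub_mul]

lemma coeff_succ_theta2 (q : K) (n : ℕ) :
    coeff (n + 1) (theta2 q) = q ^ (n + 1) - q ^ n := by
  simp [theta2, ← mk_pow_eq_inv_one_sub_C_mul_X, sub_mul, coeff_succ_X_mul]

end PowerSeries

/-- `CT(x₁^m x₂^p · θ/(x₁ - x₂))`, where `θ/(x₁ - x₂) = -x₂⁻¹ ∑ₙ qⁿ (x₁/x₂)ⁿ`. -/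
noncomputable def ctDivMono (q : K) (m p : ℤ) : K :=
  if p = 1 - m ∧ m ≤ 0 then -q ^ (-m).toNat else 0

lemma ctMono_eq_ctDivMono_sub (q : K) (m p : ℤ) :
    ctMono q m p = ctDivMono q (m + 1) p - ctDivMono q m (p + 1) := by
  unfold ctMono ctDivMono
  by_cases hp : p = -m
  · subst hp
    rcases lt_trichotomy m 0 with hm | rfl | hm
    · obtain ⟨n, rfl⟩ : ∃ n : ℕ, m = -(n + 1) := ⟨(-m - 1).toNat, by omega⟩
      have h1 : (-(-((n : ℤ) + 1))).toNat = n + 1 := by omega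
      have h2 : (-(-((n : ℤ) + 1) + 1)).toNat = n := by omega
      rw [if_pos (by omega), if_pos (by omega), if_pos (by omega), h1, h2, coeff_succ_theta2]
      ring
    · simp [coeff_zero_theta2]
    · rw [if_neg (by omega), if_neg (by omega), if_neg (by omega), sub_zero]
  · rw [if_neg (by omega), if_neg (by omega), if_neg (by omega), sub_zero]

lemma q_mul_ctDivMono_sub (q : K) (m p : ℤ) :
    q * ctDivMono q (m + 1) p - ctDivMono q m (p + 1) = if m = 0 ∧ p = 0 then 1 else 0 := by
  unfold ctDivMono
  by_cases hp : p = -m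
  · subst hp
    rcases lt_trichotomy m 0 with hm | rfl | hm
    · obtain ⟨n, rfl⟩ : ∃ n : ℕ, m = -(n + 1) := ⟨(-m - 1).toNat, by omega⟩
      have h1 : (-(-((n : ℤ) + 1))).toNat = n + 1 := by omega
      have h2 : (-(-((n : ℤ) + 1) + 1)).toNat = n := by omega
      rw [if_pos (by omega), if_pos (by omega), if_neg (by omega), h1, h2, pow_succ]
      ring
    · simp
    · rw [if_neg (by omega), if_neg (by omega), if_neg (by omega), sub_zero, mul_zero]
  · rw [if_neg (by omega), if_neg (by omega), if_neg (by omega), sub_zero, mul_zero]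

end

namespace Laurent2

open AddMonoidAlgebra

section CommRing

variable {R : Type*} [CommRing R]

noncomputable abbrev x₁ : Laurent2 R := single (1, 0) 1

noncomputable abbrev x₂ : Laurent2 R := single (0, 1) 1

noncomputable def weightedSum (c : ℤ × ℤ → R) : Laurent2 R →ₗ[R] R :=
  Finsupp.linearCombination R c ∘ₗ (coeffLinearEquiv R).toLinearMap

lemma weightedSum_single (c : ℤ × ℤ → R) (v : ℤ × ℤ) (a : R) :
    weightedSum c (single v a) = a * c v :=
  Finsupp.linearCombination_single R a v

lemma weightedSum_mul (c : ℤ × ℤ → R) (f g : Laurent2 R) :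
    weightedSum c (f * g) =
      f.coeff.sum fun v a => g.coeff.sum fun w b => a * b * c (v + w) := by
  rw [mul_def, map_finsuppSum]
  refine Finsupp.sum_congr fun v _ => ?_
  rw [map_finsuppSum]
  exact Finsupp.sum_congr fun w _ => weightedSum_single c _ _

lemma swap2_eq_domCongr (f : Laurent2 R) : swap2 f = domCongr R R AddEquiv.prodComm f := rfl

lemma swap2_mul (f g : Laurent2 R) : swap2 (f * g) = swap2 f * swap2 g := by
  simp only [swap2_eq_domCongr, map_mul]

lemma swap2_swap2 (f : Laurent2 R) : swap2 (swap2 f) = f := by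
  ext v
  simp [swap2_eq_domCongr]

lemma coeff_zero_swap2 (f : Laurent2 R) : (swap2 f).coeff 0 = f.coeff 0 := by
  simp [swap2_eq_domCongr]

lemma coeff_zero_swap2_mul_sub (f g : Laurent2 R) : (swap2 f * g - f * swap2 g).coeff 0 = 0 := by
  rw [coeff_sub, Finsupp.sub_apply, sub_eq_zero, ← coeff_zero_swap2, swap2_mul, swap2_swap2]

noncomputable def club : Laurent2 R ≃ₐ[R] Laurent2 R :=
  domCongr R R (AddEquiv.prodComm.trans (AddEquiv.neg _))

lemma club_single (v : ℤ × ℤ) (a : R) : club (single v a) = single (-v.swap) a := by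
  simp [club, domCongr]

lemma club_swap2 (f : Laurent2 R) : club (swap2 f) = swap2 (club f) := by
  ext v
  simp [club, swap2_eq_domCongr]

/-- `B = (f)□₁`, with the division by `x₁ - x₂` cleared. -/
def IsBox (q : R) (f B : Laurent2 R) : Prop :=
  B * (x₁ - x₂) = (x₁ - single 0 q * x₂) * f - (x₂ - single 0 q * x₁) * swap2 f

lemma IsBox.mul_sub_mul {q : R} {f g Bf Bg : Laurent2 R} (hf : IsBox q f Bf) (hg : IsBox q g Bg) :
    (Bf * g - f * Bg) * (x₁ - x₂) = (single 0 q * x₁ - x₂) * (swap2 f * g - f * swap2 g) := by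
  unfold IsBox at hf hg
  linear_combination g * hf - f * hg

lemma IsBox.map_club {q : R} {f B : Laurent2 R} (h : IsBox q f B) :
    IsBox q (club f) (club B) := by
  set u : Laurent2 R := single (-1, -1) 1
  have hu : IsUnit u :=
    IsUnit.of_mul_eq_one (single (1, 1) 1) (by simp [u, single_mul_single, one_def]; rfl)
  have hx₁ : club x₁ = x₁ * u := by simp [u, club_single, single_mul_single]
  have hx₂ : club x₂ = x₂ * u := by simp [u, club_single, single_mul_single]
  have hq : club (single 0 q) = single 0 q := by simp [club_single]
  have h' := congrArg club h
  simp only [map_mul, map_sub, hx₁, hx₂, hq, club_swap2] at h'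
  refine hu.mul_right_cancel ?_
  linear_combination h'

end CommRing

section Field

variable {K : Type*} [Field K]

noncomputable abbrev ct (q : K) : Laurent2 K →ₗ[K] K := weightedSum fun v => ctMono q v.1 v.2

noncomputable abbrev ctDiv (q : K) : Laurent2 K →ₗ[K] K :=
  weightedSum fun v => ctDivMono q v.1 v.2

lemma ct_eq_ctDiv_mul (q : K) (D : Laurent2 K) : ct q D = ctDiv q (D * (x₁ - x₂)) := by
  induction D using induction_linear with
  | zero => simp
  | add f g hf hg => rw [add_mul, map_add, map_add, hf, hg]
  | single v a =>
    rw [mul_sub, single_mul_single, single_mul_single, map_sub, weightedSum_single,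
      weightedSum_single, weightedSum_single, ← mul_sub, mul_one, ctMono_eq_ctDivMono_sub]
    simp only [Prod.fst_add, Prod.snd_add, add_zero]

/-- The kernel `(qx₁ - x₂)·θ/(x₁ - x₂)` is `1`. -/
lemma ctDiv_mul (q : K) (S : Laurent2 K) :
    ctDiv q ((single 0 q * x₁ - x₂) * S) = S.coeff 0 := by
  rw [single_mul_single, zero_add, mul_one]
  induction S using induction_linear with
  | zero => simp
  | add f g hf hg => rw [mul_add, map_add, hf, hg, coeff_add, Finsupp.add_apply]
  | single v a =>
    rw [sub_mul, single_mul_single, single_mul_single, map_sub, weightedSum_single,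
      weightedSum_single, one_mul, coeff_single, Finsupp.single_apply]
    simp only [Prod.fst_add, Prod.snd_add, zero_add]
    rw [show ∀ X Y : K, q * a * X - a * Y = a * (q * X - Y) from fun _ _ => by ring,
      add_comm 1, add_comm 1, q_mul_ctDivMono_sub]
    simp [Prod.ext_iff]

lemma ct_eq_coeff_zero_of_mul_eq {q : K} {D S : Laurent2 K}
    (h : D * (x₁ - x₂) = (single 0 q * x₁ - x₂) * S) : ct q D = S.coeff 0 := by
  rw [ct_eq_ctDiv_mul, h, ctDiv_mul]

lemma pairing2_eq_ct (q : K) (f g : Laurent2 K) : pairing2 q f g = ct q (f * club g) := by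
  rw [weightedSum_mul, pairing2]
  refine Finsupp.sum_congr fun v _ => ?_
  simp [club, domCongr, sub_eq_add_neg]

end Field

end Laurent2

open Laurent2 in
/-- for `n = 2`, the operator `□₁` (acting on the right,
`(f)□₁ = ∂₁((x₁ - qx₂)f)`, characterized by `((f)□₁)·(x₁-x₂) = (x₁-qx₂)f - (x₂-qx₁)f^{s₁}`)
is self-adjoint for the bilinear form `(f,g)_q = CT(f g^♣ (1-x₁/x₂)/(1-qx₁/x₂))`:
`((f)□₁, g)_q = (f, (g)□₁)_q`. -/
theorem box_self_adjoint {K : Type*} [Field K] (q : K) (f g Bf Bg : Laurent2 K)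
    (X1 X2 : Laurent2 K)
    (hX1 : X1 = AddMonoidAlgebra.single ((1 : ℤ), (0 : ℤ)) (1 : K))
    (hX2 : X2 = AddMonoidAlgebra.single ((0 : ℤ), (1 : ℤ)) (1 : K))
    (hBf : Bf * (X1 - X2)
        = (X1 - (AddMonoidAlgebra.single 0 q) * X2) * f
          - (X2 - (AddMonoidAlgebra.single 0 q) * X1) * swap2 f)
    (hBg : Bg * (X1 - X2)
        = (X1 - (AddMonoidAlgebra.single 0 q) * X2) * g
          - (X2 - (AddMonoidAlgebra.single 0 q) * X1) * swap2 g) :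
    pairing2 q Bf g = pairing2 q f Bg := by
  subst hX1 hX2
  have hf : IsBox q f Bf := hBf
  have hg : IsBox q (club g) (club Bg) := IsBox.map_club hBg
  rw [pairing2_eq_ct, pairing2_eq_ct, ← sub_eq_zero, ← map_sub,
    ct_eq_coeff_zero_of_mul_eq (hf.mul_sub_mul hg), coeff_zero_swap2_mul_sub]
end

section
/- If λ and u are weakly decreasing n-tuples of nonnegative integers, v is a permutation (rearrangement) of u, μ is a permutation of λ, and both systems of inequalities hold: vₙ+vₙ₋₁+⋯+v_{n-k+1} ≥ λ₁+⋯+λ_k for all 1≤k≤n, and μₙ+⋯+μ_{n-k+1} ≥ u₁+⋯+u_k for all 1≤k≤n, then u = λ, v = λ reversed, and μ = u reversed. -/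
open Finset

private lemma aux_card_lt (n k : ℕ) (hk : k ≤ n) :
    (Finset.univ.filter (fun i : Fin n => (i : ℕ) < k)).card = k := by
  rw [Finset.card_filter, Fin.sum_univ_eq_sum_range (fun i => if i < k then 1 else 0),
    ← Finset.card_filter]
  have : (Finset.range n).filter (fun i => i < k) = Finset.range k := by
    ext i; simp; omega
  rw [this, Finset.card_range]

private lemma aux_U_succ (n : ℕ) (w : Fin n → ℕ) (j : Fin n) :
    ∑ i ∈ Finset.univ.filter (fun i : Fin n => (i : ℕ) < (j : ℕ) + 1), w i
      = w j + ∑ i ∈ Finset.univ.filter (fun i : Fin n => (i : ℕ) < (j : ℕ)), w i := by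
  have hset : Finset.univ.filter (fun i : Fin n => (i : ℕ) < (j : ℕ) + 1)
      = insert j (Finset.univ.filter (fun i : Fin n => (i : ℕ) < (j : ℕ))) := by
    ext i
    simp [Nat.lt_succ_iff_lt_or_eq, Fin.ext_iff, or_comm]
    rw [Fin.le_iff_val_le_val, Fin.lt_iff_val_lt_val]; omega
  rw [hset, Finset.sum_insert (by simp)]

private lemma aux_T_succ (n : ℕ) (w : Fin n → ℕ) (j : Fin n) :
    ∑ i ∈ Finset.univ.filter (fun i : Fin n => (j : ℕ) ≤ (i : ℕ)), w i
      = w j + ∑ i ∈ Finset.univ.filter (fun i : Fin n => (j : ℕ) + 1 ≤ (i : ℕ)), w i := by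
  have hset : Finset.univ.filter (fun i : Fin n => (j : ℕ) ≤ (i : ℕ))
      = insert j (Finset.univ.filter (fun i : Fin n => (j : ℕ) + 1 ≤ (i : ℕ))) := by
    ext i
    simp only [Finset.mem_filter, Finset.mem_univ, true_and, Finset.mem_insert]
    constructor
    · intro h
      rcases eq_or_lt_of_le h with h | h
      · exact Or.inl (Fin.ext h.symm)
      · exact Or.inr h
    · rintro (rfl | h)
      · exact le_refl _
      · omega
  rw [hset, Finset.sum_insert (by simp)]

/-- Sum of `u` over any finset is at most the sum of the top `card` values. -/
private lemma aux_top (n : ℕ) (u : Fin n → ℕ) (hu : Antitone u) :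
    ∀ (k : ℕ) (T : Finset (Fin n)), T.card = k →
      ∑ i ∈ T, u i ≤ ∑ i ∈ Finset.univ.filter (fun i : Fin n => (i : ℕ) < k), u i := by
  intro k
  induction k with
  | zero => intro T hT; simp [Finset.card_eq_zero.mp hT]
  | succ k ih =>
    intro T hT
    have hne : T.Nonempty := Finset.card_pos.mp (by omega)
    set M := T.max' hne with hM
    have hMT : M ∈ T := T.max'_mem hne
    have hsub : T ⊆ Finset.Iic M := fun i hi => Finset.mem_Iic.mpr (T.le_max' i hi)
    have hcard : k + 1 ≤ (M : ℕ) + 1 := by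
      rw [← hT, ← Fin.card_Iic M]; exact Finset.card_le_card hsub
    have hkn : k < n := lt_of_le_of_lt (by omega) M.isLt
    have hle : (⟨k, hkn⟩ : Fin n) ≤ M := by simp [Fin.le_def]; omega
    have h1 : ∑ i ∈ T, u i = u M + ∑ i ∈ T.erase M, u i :=
      (Finset.add_sum_erase T u hMT).symm
    have h2 : ∑ i ∈ T.erase M, u i
        ≤ ∑ i ∈ Finset.univ.filter (fun i : Fin n => (i : ℕ) < k), u i :=
      ih _ (by rw [Finset.card_erase_of_mem hMT, hT]; rfl)
    have h3 := aux_U_succ n u ⟨k, hkn⟩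
    simp only at h3
    rw [h1, h3]
    exact Nat.add_le_add (hu hle) h2

private lemma aux_card_ge (n k : ℕ) (hk : k ≤ n) :
    (Finset.univ.filter (fun i : Fin n => n - k ≤ (i : ℕ))).card = k := by
  have h := Finset.card_filter_add_card_filter_not
    (s := (Finset.univ : Finset (Fin n))) (fun i : Fin n => (i : ℕ) < n - k)
  have h2 : (Finset.univ.filter (fun i : Fin n => ¬ (i : ℕ) < n - k))
      = Finset.univ.filter (fun i : Fin n => n - k ≤ (i : ℕ)) := by
    apply Finset.filter_congr; intro i _; simp [not_lt]
  rw [h2, aux_card_lt n (n - k) (by omega), Finset.card_univ, Fintype.card_fin] at h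
  omega

/-- The key bound: a tail sum of a rearrangement of `u` is at most the top-`k` sum of `u`. -/
private lemma aux_bound (n : ℕ) (u : Fin n → ℕ) (hu : Antitone u) (τ : Equiv.Perm (Fin n))
    (k : ℕ) (hk : k ≤ n) :
    ∑ i ∈ Finset.univ.filter (fun i : Fin n => n - k ≤ (i : ℕ)), (u ∘ τ) i
      ≤ ∑ i ∈ Finset.univ.filter (fun i : Fin n => (i : ℕ) < k), u i := by
  set S := Finset.univ.filter (fun i : Fin n => n - k ≤ (i : ℕ)) with hS
  have himg : ∑ i ∈ S, (u ∘ τ) i = ∑ j ∈ S.image τ, u j :=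
    (Finset.sum_image (fun x _ y _ h => τ.injective h)).symm
  have hcard : (S.image τ).card = k := by
    rw [Finset.card_image_of_injective _ τ.injective, hS, aux_card_ge n k hk]
  rw [himg]
  exact aux_top n u hu k _ hcard

/-- If `λ` and `u` are weakly decreasing `n`-tuples of nonnegative
integers, `v` is a rearrangement of `u`, `μ` is a rearrangement of `λ`, and both systems
of inequalities `vₙ + ⋯ + v_{n-k+1} ≥ λ₁ + ⋯ + λ_k` and
`μₙ + ⋯ + μ_{n-k+1} ≥ u₁ + ⋯ + u_k` hold for all `1 ≤ k ≤ n`, then `u = λ`,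
`v = λ` reversed and `μ = u` reversed. -/
theorem dominance_forces_reversal (n : ℕ) (lam u v mu : Fin n → ℕ)
    (hlam : Antitone lam) (hu : Antitone u)
    (hv : ∃ τ : Equiv.Perm (Fin n), v = u ∘ τ)
    (hmu : ∃ τ : Equiv.Perm (Fin n), mu = lam ∘ τ)
    (h1 : ∀ k ≤ n, ∑ i ∈ Finset.univ.filter (fun i : Fin n => n - k ≤ (i : ℕ)), v i
          ≥ ∑ i ∈ Finset.univ.filter (fun i : Fin n => (i : ℕ) < k), lam i)
    (h2 : ∀ k ≤ n, ∑ i ∈ Finset.univ.filter (fun i : Fin n => n - k ≤ (i : ℕ)), mu i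
          ≥ ∑ i ∈ Finset.univ.filter (fun i : Fin n => (i : ℕ) < k), u i) :
    u = lam ∧ v = lam ∘ Fin.rev ∧ mu = u ∘ Fin.rev := by
  obtain ⟨τ, rfl⟩ := hv
  obtain ⟨σ, rfl⟩ := hmu
  -- notation: U w k = top-k sum, T w k = tail-k sum
  set U : (Fin n → ℕ) → ℕ → ℕ :=
    fun w k => ∑ i ∈ Finset.univ.filter (fun i : Fin n => (i : ℕ) < k), w i with hUdef
  set T : (Fin n → ℕ) → ℕ → ℕ :=
    fun w k => ∑ i ∈ Finset.univ.filter (fun i : Fin n => n - k ≤ (i : ℕ)), w i with hTdef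
  have hbv : ∀ k ≤ n, T (u ∘ τ) k ≤ U u k := fun k hk => aux_bound n u hu τ k hk
  have hbm : ∀ k ≤ n, T (lam ∘ σ) k ≤ U lam k := fun k hk => aux_bound n lam hlam σ k hk
  have hUeq : ∀ k ≤ n, U u k = U lam k := fun k hk =>
    le_antisymm (le_trans (h2 k hk) (hbm k hk)) (le_trans (h1 k hk) (hbv k hk))
  have hTv : ∀ k ≤ n, T (u ∘ τ) k = U u k := fun k hk =>
    le_antisymm (hbv k hk) (le_trans (le_of_eq (hUeq k hk)) (h1 k hk))
  have hTm : ∀ k ≤ n, T (lam ∘ σ) k = U u k := fun k hk =>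
    le_antisymm (le_trans (hbm k hk) (le_of_eq (hUeq k hk).symm)) (h2 k hk)
  -- u = lam
  have hulam : u = lam := by
    funext j
    have ha := hUeq ((j : ℕ) + 1) j.isLt
    have hb := hUeq (j : ℕ) (le_of_lt j.isLt)
    have hc := aux_U_succ n u j
    have hd := aux_U_succ n lam j
    simp only [hUdef] at ha hb
    rw [hc, hd, hb] at ha
    omega
  -- pointwise reconstruction for a tail-equal rearrangement
  have key : ∀ (w : Fin n → ℕ), (∀ k ≤ n, T w k = U u k) → w = u ∘ Fin.rev := by
    intro w hw
    funext j
    have hj : (j : ℕ) < n := j.isLt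
    have e1 := hw (n - (j : ℕ)) (by omega)
    have e2 := hw (n - ((j : ℕ) + 1)) (by omega)
    have hs1 : n - (n - (j : ℕ)) = (j : ℕ) := by omega
    have hs2 : n - (n - ((j : ℕ) + 1)) = (j : ℕ) + 1 := by omega
    simp only [hTdef, hUdef, hs1, hs2] at e1 e2
    have hT := aux_T_succ n w j
    rw [hT, e2] at e1
    -- now: w j + U u (n - (j+1)) = U u (n - j)
    have hrev : (Fin.rev j : ℕ) = n - ((j : ℕ) + 1) := Fin.val_rev j
    have hUs := aux_U_succ n u (Fin.rev j)
    have hrn : (Fin.rev j : ℕ) + 1 = n - (j : ℕ) := by omega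
    rw [hrn, hrev] at hUs
    rw [hUs] at e1
    have := Nat.add_right_cancel e1
    simpa using this
  have hv' : u ∘ τ = u ∘ Fin.rev := key (u ∘ τ) hTv
  have hm' : lam ∘ σ = u ∘ Fin.rev := key (lam ∘ σ) hTm
  refine ⟨hulam, ?_, hm'⟩
  rw [hv', hulam]
end

section
/- For n = 2, the Cauchy identity Σ_{u∈ℕ²} K_u(x₁,x₂) K̂_{(u₂,u₁)}(y₁,y₂) = 1/((1-x₁y₁)(1-x₁y₂)(1-x₂y₁)) holds as an identity of formal power series, where for weakly decreasing u the key polynomials are K_u = K̂_u = x₁^{u₁}x₂^{u₂}, and for u₁ < u₂, K_{(u₁,u₂)} = (x^{(u₂,u₁)})π₁ and K̂_{(u₁,u₂)} = (x^{(u₂,u₁)})π̂₁. -/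
open scoped Classical

/-- The key polynomial `K_{(a,b)}(s,t)`: for `b ≤ a` (weakly decreasing index) it is the
monomial `s^a t^b`; for `a < b` it is `(s^b t^a)π₁ = Σ_{j=a}^{b} s^j t^{a+b-j}`
(the Schur polynomial `s_{(b,a)}`). -/
noncomputable def keyK {R : Type*} [CommRing R] (a b : ℕ) (s t : R) : R :=
  if b ≤ a then s ^ a * t ^ b else ∑ j ∈ Finset.Icc a b, s ^ j * t ^ (a + b - j)

/-- The dual key polynomial `K̂_{(a,b)}(s,t)`: for `b ≤ a` it is `s^a t^b`; for `a < b`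
it is `(s^b t^a)π̂₁ = K_{(a,b)} - s^b t^a`. -/
noncomputable def keyKhat {R : Type*} [CommRing R] (a b : ℕ) (s t : R) : R :=
  if b ≤ a then s ^ a * t ^ b
  else (∑ j ∈ Finset.Icc a b, s ^ j * t ^ (a + b - j)) - s ^ b * t ^ a

/-!
Expanding `1/((1-x₁y₁)(1-x₁y₂)(1-x₂y₁))` into geometric series, its coefficient at
`x₁^d₀ x₂^d₁ y₁^d₂ y₂^d₃` is `1` exactly when `d = (i+j, k, i+k, j)` for some `i, j, k`, that is,
when `d₀ + d₁ = d₂ + d₃` and `d₃ ≤ d₀`; multiplying this indicator series by the three factors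
kills `k`, `j` and `i` in turn and leaves `1`. On the other side, each product
`K_{(a,b)}(x) K̂_{(b,a)}(y)` is a sum of distinct monomials with coefficient `1`, and their
supports partition the set above: `d` arises from `(a,b) = (d₀,d₁)` when `d₂ < d₀` and from
`(a,b) = (d₃,d₂)` otherwise.
-/

open MvPowerSeries

section KeyPolynomials

variable {R : Type*} [CommRing R] {a b : ℕ} (s t : R)

theorem keyK_of_le (h : a ≤ b) :
    keyK a b s t = ∑ j ∈ Finset.Icc a b, s ^ j * t ^ (a + b - j) := by
  rcases h.eq_or_lt with rfl | h
  · simp [keyK]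
  · rw [keyK, if_neg h.not_ge]

theorem keyK_of_ge (h : b ≤ a) : keyK a b s t = s ^ a * t ^ b := if_pos h

theorem keyKhat_of_ge (h : b ≤ a) : keyKhat a b s t = s ^ a * t ^ b := if_pos h

theorem keyKhat_of_lt (h : a < b) :
    keyKhat a b s t = ∑ j ∈ Finset.Ico a b, s ^ j * t ^ (a + b - j) := by
  rw [keyKhat, if_neg h.not_ge, ← Finset.Ico_add_one_right_eq_Icc,
    Finset.sum_Ico_succ_top h.le, Nat.add_sub_cancel, add_sub_cancel_right]

end KeyPolynomials

theorem finsum_boole_of_subsingleton {α R : Type*} [AddCommMonoid R] [One R] (p : α → Prop)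
    (hp : ∀ x y, p x → p y → x = y) :
    (∑ᶠ x, if p x then (1 : R) else 0) = if ∃ x, p x then 1 else 0 := by
  by_cases h : ∃ x, p x
  · obtain ⟨x, hx⟩ := h
    rw [finsum_eq_single _ x fun y hy => if_neg fun hpy => hy (hp y x hpy hx),
      if_pos hx, if_pos ⟨x, hx⟩]
  · simp [not_exists.mp h]

namespace MvPowerSeries

variable {σ R : Type*} [CommRing R]

noncomputable def indicator (c : (σ →₀ ℕ) → Prop) : MvPowerSeries σ R :=
  fun d => if c d then 1 else 0

theorem coeff_indicator (c : (σ →₀ ℕ) → Prop) (d : σ →₀ ℕ) :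
    coeff d (indicator c : MvPowerSeries σ R) = if c d then 1 else 0 := rfl

theorem coeff_one_sub_X_mul_X_mul (i j : σ) (f : MvPowerSeries σ R) (d : σ →₀ ℕ) :
    coeff d ((1 - X i * X j) * f) = coeff d f -
      if Finsupp.single i 1 + Finsupp.single j 1 ≤ d then
        coeff (d - (Finsupp.single i 1 + Finsupp.single j 1)) f else 0 := by
  rw [sub_mul, one_mul, map_sub, X_def, X_def, monomial_mul_monomial, one_mul,
    coeff_monomial_mul, one_mul]

end MvPowerSeries

section CauchyKernel

variable {R : Type*} [CommRing R]

def cauchyKernelSupport (d : Fin 4 →₀ ℕ) : Prop := d 0 + d 1 = d 2 + d 3 ∧ d 3 ≤ d 0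

theorem mul_indicator_cauchyKernelSupport_eq_one :
    (1 - X 0 * X 2) * (1 - X 0 * X 3) * (1 - X 1 * X 2) * indicator cauchyKernelSupport
      = (1 : MvPowerSeries (Fin 4) R) := by
  have kill_x₂y₁ : (1 - X 1 * X 2) * indicator cauchyKernelSupport
      = (indicator fun d => d 1 = 0 ∧ d 0 = d 2 + d 3 : MvPowerSeries (Fin 4) R) := by
    ext d
    simp only [coeff_one_sub_X_mul_X_mul, coeff_indicator, cauchyKernelSupport, Finsupp.le_def,
      Fin.forall_fin_succ, Finsupp.coe_add, Finsupp.coe_tsub, Pi.add_apply, Pi.sub_apply,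
      Finsupp.single_apply]
    grind
  have kill_x₁y₂ : (1 - X 0 * X 3) * (indicator fun d => d 1 = 0 ∧ d 0 = d 2 + d 3)
      = (indicator fun d => d 1 = 0 ∧ d 3 = 0 ∧ d 0 = d 2 : MvPowerSeries (Fin 4) R) := by
    ext d
    simp only [coeff_one_sub_X_mul_X_mul, coeff_indicator, Finsupp.le_def,
      Fin.forall_fin_succ, Finsupp.coe_add, Finsupp.coe_tsub, Pi.add_apply, Pi.sub_apply,
      Finsupp.single_apply]
    grind
  have kill_x₁y₁ : (1 - X 0 * X 2) * (indicator fun d => d 1 = 0 ∧ d 3 = 0 ∧ d 0 = d 2)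
      = (1 : MvPowerSeries (Fin 4) R) := by
    ext d
    simp only [coeff_one_sub_X_mul_X_mul, coeff_indicator, coeff_one, Finsupp.le_def,
      Finsupp.ext_iff, Fin.forall_fin_succ, Finsupp.coe_add, Finsupp.coe_tsub, Pi.add_apply,
      Pi.sub_apply, Finsupp.single_apply, Finsupp.coe_zero, Pi.zero_apply]
    grind
  rw [mul_assoc, mul_assoc, kill_x₂y₁, kill_x₁y₂, kill_x₁y₁]

theorem coeff_inv_cauchyKernel {k : Type*} [Field k] (d : Fin 4 →₀ ℕ) :
    coeff d (((1 - X 0 * X 2) * (1 - X 0 * X 3) * (1 - X 1 * X 2))⁻¹ : MvPowerSeries (Fin 4) k)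
      = if cauchyKernelSupport d then 1 else 0 := by
  have h : indicator cauchyKernelSupport
      = (((1 - X 0 * X 2) * (1 - X 0 * X 3) * (1 - X 1 * X 2))⁻¹ : MvPowerSeries (Fin 4) k) := by
    refine (MvPowerSeries.eq_inv_iff_mul_eq_one (by simp)).2 ?_
    rw [mul_comm, mul_indicator_cauchyKernelSupport_eq_one]
  rw [← h, coeff_indicator]

theorem coeff_X_pow_mul (d : Fin 4 →₀ ℕ) (p q r s : ℕ) :
    coeff d (X 0 ^ p * X 1 ^ q * (X 2 ^ r * X 3 ^ s) : MvPowerSeries (Fin 4) R)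
      = if d 0 = p ∧ d 1 = q ∧ d 2 = r ∧ d 3 = s then 1 else 0 := by
  simp [X_pow_eq, monomial_mul_monomial, coeff_monomial, Finsupp.ext_iff, Fin.forall_fin_succ,
    Finsupp.single_apply]

def cauchyTermSupport (a b : ℕ) (d : Fin 4 →₀ ℕ) : Prop :=
  (a ≤ b ∧ a ≤ d 0 ∧ d 0 ≤ b ∧ d 0 + d 1 = a + b ∧ d 2 = b ∧ d 3 = a) ∨
    (b < a ∧ d 0 = a ∧ d 1 = b ∧ b ≤ d 2 ∧ d 2 < a ∧ d 2 + d 3 = a + b)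

theorem coeff_keyK_mul_keyKhat (a b : ℕ) (d : Fin 4 →₀ ℕ) :
    coeff d (keyK a b (X 0) (X 1) * keyKhat b a (X 2) (X 3) : MvPowerSeries (Fin 4) R)
      = if cauchyTermSupport a b d then 1 else 0 := by
  rcases le_or_gt a b with h | h
  · rw [keyK_of_le _ _ h, keyKhat_of_ge _ _ h, Finset.sum_mul, map_sum]
    simp only [coeff_X_pow_mul, ite_and, Finset.sum_ite_eq, Finset.mem_Icc]
    grind [cauchyTermSupport]
  · rw [keyK_of_ge _ _ h.le, keyKhat_of_lt _ _ h, Finset.mul_sum, map_sum]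
    simp only [coeff_X_pow_mul, ite_and, Finset.sum_ite_irrel, Finset.sum_const_zero,
      Finset.sum_ite_eq, Finset.mem_Ico]
    grind [cauchyTermSupport]

theorem cauchyTermSupport_unique {a b a' b' : ℕ} {d : Fin 4 →₀ ℕ}
    (h : cauchyTermSupport a b d) (h' : cauchyTermSupport a' b' d) : (a, b) = (a', b') := by
  unfold cauchyTermSupport at h h'
  ext <;> omega

theorem exists_cauchyTermSupport_iff (d : Fin 4 →₀ ℕ) :
    (∃ u : ℕ × ℕ, cauchyTermSupport u.1 u.2 d) ↔ cauchyKernelSupport d := by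
  unfold cauchyTermSupport cauchyKernelSupport
  constructor
  · rintro ⟨u, hu⟩
    omega
  · intro h
    by_cases hd : d 2 < d 0
    · exact ⟨(d 0, d 1), Or.inr (by omega)⟩
    · exact ⟨(d 3, d 2), Or.inl (by omega)⟩

end CauchyKernel

/-- the Cauchy identity
`Σ_{u∈ℕ²} K_u(x₁,x₂) K̂_{(u₂,u₁)}(y₁,y₂) = 1/((1-x₁y₁)(1-x₁y₂)(1-x₂y₁))`
as formal power series in `x₁ = X 0`, `x₂ = X 1`, `y₁ = X 2`, `y₂ = X 3`, stated
coefficientwise (for each exponent `d`, only finitely many `u` contribute, and the sum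
of coefficients is the corresponding coefficient of the right-hand side). -/
theorem cauchy_identity_keys (d : Fin 4 →₀ ℕ) :
    (finsum fun u : ℕ × ℕ =>
      MvPowerSeries.coeff (R := ℚ) d
        (keyK u.1 u.2 (MvPowerSeries.X 0) (MvPowerSeries.X 1)
          * keyKhat u.2 u.1 (MvPowerSeries.X 2) (MvPowerSeries.X 3)))
    = MvPowerSeries.coeff (R := ℚ) d
        (((1 - MvPowerSeries.X 0 * MvPowerSeries.X 2)
          * (1 - MvPowerSeries.X 0 * MvPowerSeries.X 3)
          * (1 - MvPowerSeries.X 1 * MvPowerSeries.X 2) : MvPowerSeries (Fin 4) ℚ)⁻¹) := by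
  simp_rw [coeff_keyK_mul_keyKhat, coeff_inv_cauchyKernel]
  rw [finsum_boole_of_subsingleton _ fun u v hu hv => cauchyTermSupport_unique hu hv,
    exists_cauchyTermSupport_iff]
end

section
/- For n = 2 and a > b ≥ 0, applying the operator □₁ = (x₁ - qx₂)∂₁ to the dominant monomial x₁^a x₂^b yields a polynomial whose specialization at q = 0 is the Schur polynomial s_{(a,b)}(x₁,x₂), and which is symmetric in x₁ and x₂. -/
open MvPolynomial

private lemma sum_swap_invariant (n : ℕ) :
    (rename (Equiv.swap (1 : Fin 3) 2))
        (∑ i ∈ Finset.range n, (X 1 : MvPolynomial (Fin 3) ℚ) ^ i * X 2 ^ (n - 1 - i))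
      = ∑ i ∈ Finset.range n, (X 1 : MvPolynomial (Fin 3) ℚ) ^ i * X 2 ^ (n - 1 - i) := by
  rw [map_sum, ← Finset.sum_range_reflect]
  refine Finset.sum_congr rfl fun i hi => ?_
  simp only [Finset.mem_range] at hi
  rw [map_mul, map_pow, map_pow, rename_X, rename_X, Equiv.swap_apply_left,
    Equiv.swap_apply_right]
  have h : n - 1 - (n - 1 - i) = i := by omega
  rw [h, mul_comm]

/-- For `n = 2` and `a > b ≥ 0`, applying `□₁ = (x₁ - qx₂)∂₁` (on the
right: multiply by `x₁ - qx₂`, then apply the divided difference) to the dominant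
monomial `x₁^a x₂^b` yields a polynomial which is symmetric in `x₁, x₂` and whose
specialization at `q = 0` is the Schur polynomial `s_{(a,b)} = Σ_{j=b}^a x₁^j x₂^{a+b-j}`.
We work in `ℚ[q][x₁,x₂] = MvPolynomial (Fin 3) ℚ` with `q = X 0`, `x₁ = X 1`, `x₂ = X 2`;
the result `g` of applying `□₁` is characterized by the exact-division identity
`g·(x₁ - x₂) = (x₁ - q x₂)·x₁^a x₂^b - (x₂ - q x₁)·x₁^b x₂^a`. -/
theorem box_of_monomial_symmetric_and_schur_at_zero (a b : ℕ) (hab : b < a)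
    (g : MvPolynomial (Fin 3) ℚ)
    (hg : g * (X 1 - X 2)
        = (X 1 - X 0 * X 2) * (X 1 ^ a * X 2 ^ b)
          - (X 2 - X 0 * X 1) * (X 1 ^ b * X 2 ^ a)) :
    rename (Equiv.swap (1 : Fin 3) 2) g = g ∧
    aeval (fun i : Fin 3 => if i = 0 then 0 else X i) g
      = ∑ j ∈ Finset.Icc b a, (X 1 : MvPolynomial (Fin 3) ℚ) ^ j * X 2 ^ (a + b - j) := by
  obtain ⟨d, rfl⟩ : ∃ d, a = b + d + 1 := ⟨a - b - 1, by omega⟩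
  have hx : (X 1 - X 2 : MvPolynomial (Fin 3) ℚ) ≠ 0 := by
    intro h
    have := congrArg (coeff (Finsupp.single 1 1)) h
    simp [coeff_X', Finsupp.single_eq_single_iff] at this
  have h1 : (∑ i ∈ Finset.range (d + 2),
        (X 1 : MvPolynomial (Fin 3) ℚ) ^ i * X 2 ^ (d + 2 - 1 - i)) * (X 1 - X 2)
      = X 1 ^ (d + 2) - X 2 ^ (d + 2) := geom_sum₂_mul _ _ _
  have h2 : (∑ i ∈ Finset.range d,
        (X 1 : MvPolynomial (Fin 3) ℚ) ^ i * X 2 ^ (d - 1 - i)) * (X 1 - X 2)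
      = X 1 ^ d - X 2 ^ d := geom_sum₂_mul _ _ _
  have hgeq : g = X 1 ^ b * X 2 ^ b *
        (∑ i ∈ Finset.range (d + 2), X 1 ^ i * X 2 ^ (d + 2 - 1 - i))
      - X 0 * (X 1 ^ (b + 1) * X 2 ^ (b + 1) *
        (∑ i ∈ Finset.range d, X 1 ^ i * X 2 ^ (d - 1 - i))) := by
    apply mul_right_cancel₀ hx
    linear_combination hg - (X 1 ^ b * X 2 ^ b) * h1
      + X 0 * X 1 ^ (b + 1) * X 2 ^ (b + 1) * h2
  have h0 : Equiv.swap (1 : Fin 3) 2 0 = 0 := by decide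
  constructor
  · rw [hgeq]
    simp only [map_sub, map_mul, map_pow, sum_swap_invariant, rename_X,
      Equiv.swap_apply_left, Equiv.swap_apply_right, h0]
    ring
  · rw [hgeq]
    simp only [map_sub, map_mul, map_pow, map_sum, aeval_X,
      show ((0 : Fin 3) = 0) = True by simp, show ((1 : Fin 3) = 0) = False by simp,
      show ((2 : Fin 3) = 0) = False by simp, if_true, if_false]
    rw [← Finset.Ico_add_one_right_eq_Icc, Finset.sum_Ico_eq_sum_range]
    have hr : b + d + 1 + 1 - b = d + 2 := by omega
    rw [hr, Finset.mul_sum, zero_mul, sub_zero]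
    refine Finset.sum_congr rfl fun i hi => ?_
    simp only [Finset.mem_range] at hi
    have e2 : b + d + 1 + b - (b + i) = b + (d + 2 - 1 - i) := by omega
    rw [e2, pow_add, pow_add]
    ring
end
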